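/- Let H be a real or complex Hilbert space and q ≥ 2. There exists C_q > 0 such that for all u, z ∈ H, | ‖u + z‖^q − ‖u‖^q − q ‖u‖^{q−2} Re⟨u, z⟩ | ≤ C_q ( ‖u‖^{q−2} ‖z‖^2 + ‖z‖^q ). -/

import Mathlib

/-!
Put `x = ‖u + z‖²`, `y = ‖u‖²` and `φ t = t ^ (q/2)`, so that `‖u + z‖ ^ q = φ x`,
`‖u‖ ^ q = φ y` and `x - y = 2 Re⟨u, z⟩ + ‖z‖²`. When `5‖z‖ ≤ ‖u‖`, `x` stays in `[y/2, 2y]`,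
where `φ''` is of size `y ^ (q/2 - 2)`; the second-order Taylor remainder of `φ` at `y` is then
`O(‖u‖ ^ (q-4) (x - y)²) = O(‖u‖ ^ (q-2) ‖z‖²)`. Otherwise `‖u‖ ≤ 5‖z‖`, and each of the three
terms is crudely `O(‖z‖ ^ q)`.
-/

open Real Set

theorem Convex.abs_sub_sub_deriv_mul_le {f f' f'' : ℝ → ℝ} {s : Set ℝ} {M x y : ℝ}
    (hs : Convex ℝ s) (hf : ∀ t ∈ s, HasDerivAt f (f' t) t)
    (hf' : ∀ t ∈ s, HasDerivAt f' (f'' t) t) (hM : ∀ t ∈ s, |f'' t| ≤ M)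
    (hx : x ∈ s) (hy : y ∈ s) :
    |f x - f y - f' y * (x - y)| ≤ M * (x - y) ^ 2 := by
  have hM0 : 0 ≤ M := (abs_nonneg _).trans (hM y hy)
  have hsub : uIcc y x ⊆ s := hs.ordConnected.uIcc_subset hy hx
  have hslope : ∀ t ∈ uIcc y x, ‖f' t - f' y‖ ≤ M * |x - y| := fun t ht =>
    calc ‖f' t - f' y‖ ≤ M * ‖t - y‖ :=
          hs.norm_image_sub_le_of_norm_hasDerivWithin_le
            (fun u hu => (hf' u hu).hasDerivWithinAt) hM hy (hsub ht)
      _ ≤ M * |x - y| := mul_le_mul_of_nonneg_left (abs_sub_left_of_mem_uIcc ht) hM0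
  have hg := (convex_uIcc y x).norm_image_sub_le_of_norm_hasDerivWithin_le
    (f := fun t => f t - f' y * t) (f' := fun t => f' t - f' y)
    (fun t ht => (((hf t (hsub ht)).sub ((hasDerivAt_id' t).const_mul (f' y))).congr_deriv
      (by ring)).hasDerivWithinAt)
    hslope left_mem_uIcc right_mem_uIcc
  calc |f x - f y - f' y * (x - y)| = ‖(f x - f' y * x) - (f y - f' y * y)‖ := by
        rw [Real.norm_eq_abs]; ring_nf
    _ ≤ M * |x - y| * ‖x - y‖ := hg
    _ = M * (x - y) ^ 2 := by rw [Real.norm_eq_abs, mul_assoc, ← sq, sq_abs]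

theorem rpow_le_two_rpow_abs_mul_rpow {a t y : ℝ} (hy : 0 < y) (ht : t ∈ Icc (y / 2) (2 * y)) :
    t ^ a ≤ 2 ^ |a| * y ^ a := by
  rcases le_total 0 a with ha | ha
  · calc t ^ a ≤ (2 * y) ^ a := rpow_le_rpow (by linarith [ht.1]) ht.2 ha
      _ = 2 ^ |a| * y ^ a := by rw [abs_of_nonneg ha, mul_rpow zero_le_two hy.le]
  · calc t ^ a ≤ (y / 2) ^ a := rpow_le_rpow_of_nonpos (by positivity) ht.1 ha
      _ = 2 ^ |a| * y ^ a := by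
        rw [abs_of_nonpos ha, div_rpow hy.le zero_le_two, rpow_neg zero_le_two]; ring

theorem abs_rpow_sub_rpow_sub_mul_le {p x y : ℝ} (hy : 0 < y) (hx : x ∈ Icc (y / 2) (2 * y)) :
    |x ^ p - y ^ p - p * y ^ (p - 1) * (x - y)| ≤
      |p * (p - 1)| * 2 ^ |p - 2| * y ^ (p - 2) * (x - y) ^ 2 := by
  have hpos : ∀ t ∈ Icc (y / 2) (2 * y), 0 < t := fun t ht => by linarith [ht.1]
  refine (convex_Icc _ _).abs_sub_sub_deriv_mul_le (f := fun t => t ^ p)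
    (f' := fun t => p * t ^ (p - 1)) (f'' := fun t => p * ((p - 1) * t ^ (p - 1 - 1)))
    (fun t ht => hasDerivAt_rpow_const (Or.inl (hpos t ht).ne'))
    (fun t ht => (hasDerivAt_rpow_const (Or.inl (hpos t ht).ne')).const_mul p)
    (fun t ht => ?_) hx ⟨by linarith, by linarith⟩
  rw [show p - 1 - 1 = p - 2 by ring, ← mul_assoc, abs_mul,
    abs_of_pos (rpow_pos_of_pos (hpos t ht) _), mul_assoc]
  exact mul_le_mul_of_nonneg_left (rpow_le_two_rpow_abs_mul_rpow hy ht) (abs_nonneg _)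

theorem sq_rpow_div_two {a : ℝ} (ha : 0 ≤ a) (e : ℝ) : (a ^ 2) ^ (e / 2) = a ^ e := by
  rw [← rpow_natCast_mul ha]; congr 1; push_cast; ring

theorem abs_rpow_sub_rpow_sub_le_of_five_mul_le {q N n s r : ℝ} (hN : 0 ≤ N) (hn : 0 < n)
    (hN2 : N ^ 2 = n ^ 2 + 2 * r + s ^ 2) (hr : |r| ≤ n * s) (hsn : 5 * s ≤ n) :
    |N ^ q - n ^ q - q * n ^ (q - 2) * r| ≤
      (5 * (|q / 2 * (q / 2 - 1)| * 2 ^ |q / 2 - 2|) + |q| / 2) * (n ^ (q - 2) * s ^ 2) := by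
  have hs : 0 ≤ s := nonneg_of_mul_nonneg_right ((abs_nonneg r).trans hr) hn
  obtain ⟨hr₁, hr₂⟩ := abs_le.mp hr
  have hns : n * s ≤ n ^ 2 / 5 := by nlinarith
  have hss : s ^ 2 ≤ n * s / 5 := by nlinarith
  have hdiff : N ^ 2 - n ^ 2 = 2 * r + s ^ 2 := by rw [hN2]; ring
  have hx : N ^ 2 ∈ Icc (n ^ 2 / 2) (2 * n ^ 2) := ⟨by nlinarith, by nlinarith⟩
  have hdiff_sq : (N ^ 2 - n ^ 2) ^ 2 ≤ 5 * (n ^ 2 * s ^ 2) := by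
    rw [hdiff, ← sq_abs]
    have : |2 * r + s ^ 2| ≤ 11 / 5 * (n * s) := abs_le.mpr ⟨by nlinarith, by nlinarith⟩
    nlinarith [abs_nonneg (2 * r + s ^ 2)]
  have htaylor := abs_rpow_sub_rpow_sub_mul_le (p := q / 2) (pow_pos hn 2) hx
  have hexp₁ : (n ^ 2) ^ (q / 2 - 1) = n ^ (q - 2) := by
    rw [show q / 2 - 1 = (q - 2) / 2 by ring, sq_rpow_div_two hn.le]
  have hexp₂ : (n ^ 2) ^ (q / 2 - 2) = n ^ (q - 4) := by
    rw [show q / 2 - 2 = (q - 4) / 2 by ring, sq_rpow_div_two hn.le]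
  rw [sq_rpow_div_two hN, sq_rpow_div_two hn.le, hexp₁, hexp₂] at htaylor
  have hpow : n ^ (q - 4) * n ^ 2 = n ^ (q - 2) := by
    rw [← rpow_natCast, ← rpow_add hn]; congr 1; push_cast; ring
  set K := |q / 2 * (q / 2 - 1)| * 2 ^ |q / 2 - 2|
  calc |N ^ q - n ^ q - q * n ^ (q - 2) * r|
      = |(N ^ q - n ^ q - q / 2 * n ^ (q - 2) * (N ^ 2 - n ^ 2)) +
          q / 2 * n ^ (q - 2) * s ^ 2| := by
        rw [hdiff]; ring_nf
    _ ≤ K * n ^ (q - 4) * (N ^ 2 - n ^ 2) ^ 2 + |q| / 2 * (n ^ (q - 2) * s ^ 2) := by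
        refine (abs_add_le _ _).trans (add_le_add htaylor (le_of_eq ?_))
        rw [abs_mul, abs_mul, abs_div, abs_two, abs_of_nonneg (by positivity : 0 ≤ n ^ (q - 2)),
          abs_of_nonneg (sq_nonneg s)]; ring
    _ ≤ K * n ^ (q - 4) * (5 * (n ^ 2 * s ^ 2)) + |q| / 2 * (n ^ (q - 2) * s ^ 2) := by
        gcongr
    _ = (5 * K + |q| / 2) * (n ^ (q - 2) * s ^ 2) := by
        rw [← hpow]; ring

theorem abs_rpow_sub_rpow_sub_le_of_le_five_mul {q N n s r : ℝ} (hq : 2 ≤ q) (hN : 0 ≤ N)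
    (hn : 0 ≤ n) (hN2 : N ^ 2 = n ^ 2 + 2 * r + s ^ 2) (hr : |r| ≤ n * s) (hns : n ≤ 5 * s) :
    |N ^ q - n ^ q - q * n ^ (q - 2) * r| ≤ (6 ^ q + (1 + q) * 5 ^ q) * s ^ q := by
  have hs : 0 ≤ s := by linarith
  have hN6 : N ≤ 6 * s := by nlinarith [(abs_le.mp hr).2]
  have hNq : N ^ q ≤ 6 ^ q * s ^ q := by
    rw [← mul_rpow (by norm_num) hs]; exact rpow_le_rpow hN hN6 (by linarith)
  have hnq : n ^ q ≤ 5 ^ q * s ^ q := by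
    rw [← mul_rpow (by norm_num) hs]; exact rpow_le_rpow hn hns (by linarith)
  have hcross : n ^ (q - 2) * |r| ≤ 5 ^ q * s ^ q :=
    calc n ^ (q - 2) * |r| ≤ (5 * s) ^ (q - 2) * (5 * s) ^ 2 := by
          gcongr
          nlinarith [mul_le_mul_of_nonneg_right hns hs]
      _ = 5 ^ q * s ^ q := by
          rw [← rpow_natCast, ← rpow_add' (by positivity) (by norm_num; linarith),
            mul_rpow (by norm_num) hs]; norm_num
  calc |N ^ q - n ^ q - q * n ^ (q - 2) * r|
      ≤ |N ^ q| + |n ^ q| + |q * n ^ (q - 2) * r| :=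
        (abs_sub _ _).trans (add_le_add (abs_sub _ _) le_rfl)
    _ = N ^ q + n ^ q + q * (n ^ (q - 2) * |r|) := by
        rw [abs_mul, abs_mul, abs_of_nonneg (by positivity : 0 ≤ N ^ q),
          abs_of_nonneg (by positivity : 0 ≤ n ^ q), abs_of_nonneg (by linarith : 0 ≤ q),
          abs_of_nonneg (by positivity : 0 ≤ n ^ (q - 2))]; ring
    _ ≤ 6 ^ q * s ^ q + 5 ^ q * s ^ q + q * (5 ^ q * s ^ q) := by
        gcongr
    _ = (6 ^ q + (1 + q) * 5 ^ q) * s ^ q := by ring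

theorem exists_abs_rpow_sub_rpow_sub_le {q : ℝ} (hq : 2 ≤ q) :
    ∃ C, 0 < C ∧ ∀ ⦃N n s r : ℝ⦄, 0 ≤ N → 0 ≤ n → 0 ≤ s →
      N ^ 2 = n ^ 2 + 2 * r + s ^ 2 → |r| ≤ n * s →
        |N ^ q - n ^ q - q * n ^ (q - 2) * r| ≤ C * (n ^ (q - 2) * s ^ 2 + s ^ q) := by
  set A := 5 * (|q / 2 * (q / 2 - 1)| * 2 ^ |q / 2 - 2|) + |q| / 2
  set B := 6 ^ q + (1 + q) * 5 ^ q
  have hA : 0 ≤ A := by positivity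
  have hB : 0 < B :=
    add_pos_of_pos_of_nonneg (by positivity) (mul_nonneg (by linarith) (by positivity))
  refine ⟨A + B, by positivity, fun N n s r hN hn hs hN2 hr => ?_⟩
  have hX : 0 ≤ n ^ (q - 2) * s ^ 2 := by positivity
  have hY : 0 ≤ s ^ q := by positivity
  rcases lt_or_ge (5 * s) n with hsn | hns
  · calc _ ≤ A * (n ^ (q - 2) * s ^ 2) :=
          abs_rpow_sub_rpow_sub_le_of_five_mul_le hN (by linarith) hN2 hr hsn.le
      _ ≤ (A + B) * (n ^ (q - 2) * s ^ 2 + s ^ q) := by gcongr <;> linarith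
  · calc _ ≤ B * s ^ q := abs_rpow_sub_rpow_sub_le_of_le_five_mul hq hN hn hN2 hr hns
      _ ≤ (A + B) * (n ^ (q - 2) * s ^ 2 + s ^ q) := by gcongr <;> linarith

theorem stmt_11 (𝕜 : Type) [RCLike 𝕜] (H : Type) [NormedAddCommGroup H]
    [InnerProductSpace 𝕜 H] (q : ℝ) (hq : 2 ≤ q) :
    ∃ C : ℝ, 0 < C ∧ ∀ u z : H,
      |‖u + z‖ ^ q - ‖u‖ ^ q - q * ‖u‖ ^ (q - 2) * RCLike.re (inner 𝕜 u z : 𝕜)| ≤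
        C * (‖u‖ ^ (q - 2) * ‖z‖ ^ 2 + ‖z‖ ^ q) := by
  obtain ⟨C, hC, hbound⟩ := exists_abs_rpow_sub_rpow_sub_le hq
  exact ⟨C, hC, fun u z => hbound (norm_nonneg _) (norm_nonneg _) (norm_nonneg _)
    (norm_add_sq (𝕜 := 𝕜) u z) ((RCLike.abs_re_le_norm _).trans (norm_inner_le_norm u z))⟩
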